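/- arXiv:1709.04313 — 4 statements merged into one kernel-verified Lean document; each statement's English description precedes it below -/
import Mathlib

section
/- For every permutation σ in the symmetric group S_α, if τ = (1 2 ⋯ α) is the full cycle, then ξ(στ) + ξ(σ) ≤ α + 1, where ξ(π) denotes the number of disjoint cycles of π (including fixed points). -/
/-- Number of disjoint cycles of a permutation, counting fixed points. -/
def cycleCount {n : ℕ} (σ : Equiv.Perm (Fin n)) : ℕ :=
  σ.cycleType.card + (n - σ.support.card)

/-!
The number of cycles `ξ(π)` is at most the dimension of the space of `π`-invariant functions
`X → ℚ`, since the indicators of the cycles are independent invariant functions. A function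
invariant under `a` and `b` is invariant under `a * b`, so counting dimensions in the intersection
gives `dim Inv(a) + dim Inv(b) ≤ α + dim Inv(a * b)`. Take `a = σ⁻¹` and `b = σ * τ`: then
`Inv(σ⁻¹) = Inv(σ)`, and only constants are invariant under the full cycle `τ`, so
`ξ(σ * τ) + ξ(σ) ≤ α + 1`.
-/

open Module

namespace Equiv.Perm

variable {X : Type*} (K : Type*) [Field K]

noncomputable def invariants (π : Perm X) : Submodule K (X → K) :=
  LinearMap.eqLocus (LinearMap.funLeft K K π) LinearMap.id

variable {K}

theorem mem_invariants {π : Perm X} {v : X → K} : v ∈ invariants K π ↔ ∀ x, v (π x) = v x :=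
  LinearMap.mem_eqLocus.trans funext_iff

theorem invariants_inv (π : Perm X) : invariants K π⁻¹ = invariants K π := by
  ext v
  simp only [mem_invariants]
  exact ⟨fun h x => by simpa using (h (π x)).symm, fun h x => by simpa using (h (π⁻¹ x)).symm⟩

theorem invariants_inf_le_mul (a b : Perm X) :
    invariants K a ⊓ invariants K b ≤ invariants K (a * b) := by
  intro v ⟨ha, hb⟩
  rw [SetLike.mem_coe, mem_invariants] at ha hb
  exact mem_invariants.mpr fun x => (ha (b x)).trans (hb x)

theorem finrank_invariants_le_one_of_forall_exists_pow_apply_eq {π : Perm X} (x₀ : X)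
    (h : ∀ x, ∃ k : ℕ, (π ^ k) x₀ = x) : finrank K (invariants K π) ≤ 1 := by
  have hconst : ∀ v ∈ invariants K π, ∀ x, v x = v x₀ := by
    intro v hv x
    obtain ⟨k, rfl⟩ := h x
    rw [mem_invariants] at hv
    induction k with
    | zero => rfl
    | succ k ih => rw [pow_succ', mul_apply, hv, ih]
  calc finrank K (invariants K π) ≤ finrank K (K ∙ (fun _ => (1 : K) : X → K)) := by
        refine Submodule.finrank_mono fun v hv => Submodule.mem_span_singleton.mpr ⟨v x₀, ?_⟩
        ext x
        simp [hconst v hv x]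
    _ ≤ 1 := (finrank_span_le_card _).trans (by simp)

variable [Fintype X]

theorem finrank_invariants_add_finrank_invariants_le (a b : Perm X) :
    finrank K (invariants K a) + finrank K (invariants K b) ≤
      Fintype.card X + finrank K (invariants K (a * b)) := by
  rw [← Submodule.finrank_sup_add_finrank_inf_eq]
  gcongr
  · simpa using Submodule.finrank_le (invariants K a ⊔ invariants K b)
  · exact Submodule.finrank_mono (invariants_inf_le_mul a b)

theorem finrank_invariants_finRotate_le_one (n : ℕ) :
    finrank K (invariants K (finRotate n)) ≤ 1 := by
  cases n with
  | zero => exact (Submodule.finrank_le _).trans (by simp)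
  | succ n =>
    refine finrank_invariants_le_one_of_forall_exists_pow_apply_eq 0 fun i => ⟨i, ?_⟩
    rw [coe_pow, ← finCycle_eq_finRotate_iterate, finCycle_apply, zero_add]

theorem card_image_le_finrank_invariants {Y : Type*} [DecidableEq Y] {π : Perm X} (κ : X → Y)
    (hκ : ∀ x, κ (π x) = κ x) :
    (Finset.univ.image κ).card ≤ finrank K (invariants K π) := by
  set ι : X → Finset.univ.image κ := fun x => ⟨κ x, Finset.mem_image_of_mem κ (Finset.mem_univ x)⟩
  have hι : Function.Surjective ι := by
    rintro ⟨y, hy⟩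
    obtain ⟨x, -, rfl⟩ := Finset.mem_image.mp hy
    exact ⟨x, rfl⟩
  set pullback := LinearMap.funLeft K K ι
  have hrange : LinearMap.range pullback ≤ invariants K π := by
    rintro _ ⟨w, rfl⟩
    exact mem_invariants.mpr fun x => congrArg w (Subtype.ext (hκ x))
  calc (Finset.univ.image κ).card = finrank K (LinearMap.range pullback) := by
        rw [LinearMap.finrank_range_of_inj (LinearMap.funLeft_injective_of_surjective _ _ _ hι),
          finrank_fintype_fun_eq_card, Fintype.card_coe]
    _ ≤ finrank K (invariants K π) := Submodule.finrank_mono hrange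

variable [DecidableEq X]

def cycleLabel (π : Perm X) (x : X) : Perm X ⊕ X :=
  if x ∈ π.support then .inl (π.cycleOf x) else .inr x

theorem cycleLabel_apply_self (π : Perm X) (x : X) : cycleLabel π (π x) = cycleLabel π x := by
  by_cases hx : x ∈ π.support
  · rw [cycleLabel, cycleLabel, if_pos (apply_mem_support.mpr hx), if_pos hx, cycleOf_self_apply]
  · rw [notMem_support.mp hx]

theorem image_cycleLabel (π : Perm X) :
    Finset.univ.image (cycleLabel π) = π.cycleFactorsFinset.disjSum π.supportᶜ := by
  ext (c | y)
  · simp only [Finset.mem_image, Finset.mem_univ, true_and, Finset.inl_mem_disjSum, cycleLabel]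
    constructor
    · rintro ⟨x, hx⟩
      split_ifs at hx with hxs
      cases hx
      exact cycleOf_mem_cycleFactorsFinset_iff.mpr hxs
    · intro hc
      obtain ⟨a, ha⟩ := (mem_cycleFactorsFinset_iff.mp hc).1.nonempty_support
      refine ⟨a, ?_⟩
      rw [if_pos (mem_cycleFactorsFinset_support_le hc ha), ← cycle_is_cycleOf ha hc]
  · simp only [Finset.mem_image, Finset.mem_univ, true_and, Finset.inr_mem_disjSum, cycleLabel]
    constructor
    · rintro ⟨x, hx⟩
      split_ifs at hx with hxs
      cases hx
      exact Finset.mem_compl.mpr hxs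
    · intro hy
      exact ⟨y, if_neg (Finset.mem_compl.mp hy)⟩

end Equiv.Perm

open Equiv.Perm

theorem cycleCount_le_finrank_invariants (K : Type*) [Field K] {n : ℕ} (π : Equiv.Perm (Fin n)) :
    cycleCount π ≤ finrank K (invariants K π) := by
  have h := card_image_le_finrank_invariants (K := K) (cycleLabel π) (cycleLabel_apply_self π)
  rw [image_cycleLabel, Finset.card_disjSum, Finset.card_compl, Fintype.card_fin] at h
  rw [cycleCount, cycleType_def, Multiset.card_map]
  exact h

theorem cycle_lemma_general (α : ℕ) (σ : Equiv.Perm (Fin α)) :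
    cycleCount (σ * finRotate α) + cycleCount σ ≤ α + 1 := by
  have hdim := finrank_invariants_add_finrank_invariants_le (K := ℚ) σ⁻¹ (σ * finRotate α)
  rw [invariants_inv, inv_mul_cancel_left, Fintype.card_fin] at hdim
  have h₁ := cycleCount_le_finrank_invariants ℚ (σ * finRotate α)
  have h₂ := cycleCount_le_finrank_invariants ℚ σ
  have h₃ := finrank_invariants_finRotate_le_one (K := ℚ) α
  omega

theorem cycle_lemma (α : ℕ) (hα : 1 ≤ α) (σ : Equiv.Perm (Fin α)) :
    cycleCount (σ * finRotate α) + cycleCount σ ≤ α + 1 :=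
  cycle_lemma_general α σ
end

section
/- Explicit spectrum achieving the 2-design purity: for positive integers d_A ≤ d_B, define λ₁ = (d_A d_B + 1 + (d_A − 1)√((d_A+1)(d_A d_B + 1)))/(d_A (d_A d_B + 1)) and λ₂ = (d_A d_B + 1 − √((d_A+1)(d_A d_B + 1)))/(d_A (d_A d_B + 1)). Then λ₁ + (d_A − 1)λ₂ = 1, λ₁, λ₂ ≥ 0, and λ₁² + (d_A − 1)λ₂² = (d_A + d_B)/(d_A d_B + 1). -/
theorem gap_two_design_spectrum (dA dB : ℕ) (h1 : 1 ≤ dA) (h2 : dA ≤ dB) :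
    let a : ℝ := dA
    let b : ℝ := dB
    let lam1 : ℝ := (a * b + 1 + (a - 1) * Real.sqrt ((a + 1) * (a * b + 1))) / (a * (a * b + 1))
    let lam2 : ℝ := (a * b + 1 - Real.sqrt ((a + 1) * (a * b + 1))) / (a * (a * b + 1))
    lam1 + (a - 1) * lam2 = 1 ∧ 0 ≤ lam1 ∧ 0 ≤ lam2 ∧
      lam1 ^ 2 + (a - 1) * lam2 ^ 2 = (a + b) / (a * b + 1) := by
  have ha : (1:ℝ) ≤ (dA:ℝ) := by exact_mod_cast h1
  have hb : (dA:ℝ) ≤ (dB:ℝ) := by exact_mod_cast h2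
  intro a b lam1 lam2
  simp only [a, b, lam1, lam2] at *
  set s : ℝ := Real.sqrt (((dA:ℝ) + 1) * ((dA:ℝ) * dB + 1)) with hs_def
  have hb1 : (1:ℝ) ≤ (dB:ℝ) := le_trans ha hb
  have hc : (0:ℝ) < (dA:ℝ) * dB + 1 := by nlinarith
  have hD : (0:ℝ) < (dA:ℝ) * ((dA:ℝ) * dB + 1) := by nlinarith
  have hs0 : 0 ≤ s := Real.sqrt_nonneg _
  have hs2 : s ^ 2 = ((dA:ℝ) + 1) * ((dA:ℝ) * dB + 1) := by
    rw [hs_def, Real.sq_sqrt]; nlinarith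
  have hsle : s ≤ (dA:ℝ) * dB + 1 := by nlinarith
  refine ⟨?_, ?_, ?_, ?_⟩
  · field_simp
    ring
  · apply div_nonneg _ hD.le
    nlinarith
  · apply div_nonneg _ hD.le
    linarith
  · field_simp
    nlinarith [hs2, sq_nonneg s, hD, hc, mul_pos hD hc]
end

section
/- Haar average of the purity of a subsystem: for a Haar-random pure state |ψ⟩ on C^{d_A} ⊗ C^{d_B} with reduced state ρ_A = tr_B |ψ⟩⟨ψ|, the expectation of tr(ρ_A²) equals (d_A + d_B)/(d_A d_B + 1). -/
/-!
Write `M i j k l` for the average of `ψ i * ψ j * conj (ψ k) * conj (ψ l)`. Invariance under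
diagonal phases kills `M i j k l` unless `{i, j} = {k, l}` as multisets, invariance under
permutations makes `M x x x x` independent of `x`, and invariance under a reflection mixing two
coordinates `x ≠ y` gives `M x x x x = 2 * M x y x y`. The normalisation `‖ψ‖ = 1` then forces
`M i j k l = (δ i k * δ j l + δ i l * δ j k) / (d * (d + 1))` with `d = dA * dB`, and
`tr ρ_A² = ∑ ψ (a, b) * ψ (a', b') * conj (ψ (a', b)) * conj (ψ (a, b'))` averages to
`(dA * dB² + dA² * dB) / (d * (d + 1))`.
-/

open MeasureTheory

/-- Reduced density matrix on the first factor of a bipartite pure state. -/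
noncomputable def rhoA {dA dB : ℕ} (ψ : Fin dA × Fin dB → ℂ) : Matrix (Fin dA) (Fin dA) ℂ :=
  Matrix.of fun a a' => ∑ b, ψ (a, b) * star (ψ (a', b))

open ComplexConjugate Matrix

namespace Matrix

variable {n α : Type*} [Fintype n] [DecidableEq n] [CommRing α] [StarRing α]

theorem diagonal_mem_unitaryGroup {θ : n → α} (hθ : ∀ i, star (θ i) * θ i = 1) :
    diagonal θ ∈ unitaryGroup n α := by
  rw [mem_unitaryGroup_iff', star_eq_conjTranspose, diagonal_conjTranspose,
    diagonal_mul_diagonal, ← diagonal_one]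
  exact congrArg diagonal (funext hθ)

theorem permMatrix_mem_unitaryGroup (σ : Equiv.Perm n) : σ.permMatrix α ∈ unitaryGroup n α := by
  rw [mem_unitaryGroup_iff', star_eq_conjTranspose, conjTranspose_permMatrix, ← permMatrix_mul,
    mul_inv_cancel, permMatrix_one]

theorem one_sub_two_smul_vecMulVec_mem_unitaryGroup {u : n → α} (hu : star u ⬝ᵥ u = 1) :
    1 - (2 : α) • vecMulVec u (star u) ∈ unitaryGroup n α := by
  have hP : vecMulVec u (star u) * vecMulVec u (star u) = vecMulVec u (star u) := by
    rw [vecMulVec_mul_vecMulVec, hu, one_smul]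
  have hPstar : star (vecMulVec u (star u)) = vecMulVec u (star u) := by
    rw [star_eq_conjTranspose, conjTranspose_vecMulVec, star_star]
  rw [mem_unitaryGroup_iff', star_sub, star_one, star_smul, hPstar, star_ofNat, sub_mul, mul_sub,
    mul_sub, smul_mul_smul_comm, hP, one_mul, mul_one, one_mul]
  module

end Matrix

variable {ι : Type*}

def quarticMonomial (i j k l : ι) (ψ : ι → ℂ) : ℂ := ψ i * ψ j * conj (ψ k) * conj (ψ l)

noncomputable def fourthMoment (μ : Measure (ι → ℂ)) (i j k l : ι) : ℂ :=
  ∫ ψ, quarticMonomial i j k l ψ ∂μ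

theorem continuous_quarticMonomial (i j k l : ι) : Continuous (quarticMonomial i j k l) := by
  unfold quarticMonomial
  fun_prop

theorem fourthMoment_comm_left (μ : Measure (ι → ℂ)) (i j k l : ι) :
    fourthMoment μ i j k l = fourthMoment μ j i k l := by
  simp only [fourthMoment, quarticMonomial]
  congr 1 with ψ
  ring

theorem fourthMoment_comm_right (μ : Measure (ι → ℂ)) (i j k l : ι) :
    fourthMoment μ i j k l = fourthMoment μ i j l k := by
  simp only [fourthMoment, quarticMonomial]
  congr 1 with ψ
  ring

variable [Fintype ι]

def IsUnitarilyInvariant [DecidableEq ι] (μ : Measure (ι → ℂ)) : Prop :=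
  ∀ U ∈ unitaryGroup ι ℂ, μ.map (fun ψ => U *ᵥ ψ) = μ

theorem norm_le_one_of_sum_normSq_eq_one {ψ : ι → ℂ} (h : ∑ x, Complex.normSq (ψ x) = 1)
    (x : ι) : ‖ψ x‖ ≤ 1 := by
  have hx : Complex.normSq (ψ x) ≤ 1 :=
    h ▸ Finset.single_le_sum (fun y _ => Complex.normSq_nonneg (ψ y)) (Finset.mem_univ x)
  rw [Complex.normSq_eq_norm_sq] at hx
  exact (sq_le_one_iff₀ (norm_nonneg _)).1 hx

variable {μ : Measure (ι → ℂ)}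

theorem integrable_quarticMonomial [IsFiniteMeasure μ]
    (hsupp : ∀ᵐ ψ ∂μ, ∑ x, Complex.normSq (ψ x) = 1) (i j k l : ι) :
    Integrable (quarticMonomial i j k l) μ := by
  refine .of_bound (continuous_quarticMonomial i j k l).aestronglyMeasurable 1 ?_
  filter_upwards [hsupp] with ψ hψ
  have h := norm_le_one_of_sum_normSq_eq_one hψ
  simp only [quarticMonomial, norm_mul, Complex.norm_conj]
  exact mul_le_one₀ (mul_le_one₀ (mul_le_one₀ (h i) (norm_nonneg _) (h j)) (norm_nonneg _) (h k))
    (norm_nonneg _) (h l)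

theorem sum_sum_fourthMoment_eq_one [IsProbabilityMeasure μ]
    (hsupp : ∀ᵐ ψ ∂μ, ∑ x, Complex.normSq (ψ x) = 1) :
    ∑ x, ∑ y, fourthMoment μ x y x y = 1 := by
  have hint := integrable_quarticMonomial hsupp
  have hone : ∀ᵐ ψ ∂μ, ∑ x, ∑ y, quarticMonomial x y x y ψ = 1 := by
    filter_upwards [hsupp] with ψ hψ
    calc ∑ x, ∑ y, quarticMonomial x y x y ψ
        = (∑ x, ψ x * conj (ψ x)) * ∑ y, ψ y * conj (ψ y) := by
          rw [Finset.sum_mul_sum]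
          exact Finset.sum_congr rfl fun x _ => Finset.sum_congr rfl fun y _ => by
            simp only [quarticMonomial]; ring
      _ = 1 := by simp only [Complex.mul_conj, ← Complex.ofReal_sum, hψ]; simp
  calc ∑ x, ∑ y, fourthMoment μ x y x y = ∫ ψ, ∑ x, ∑ y, quarticMonomial x y x y ψ ∂μ := by
        simp (disch := fun_prop) only [integral_finsetSum, fourthMoment]
    _ = 1 := by simp [integral_congr_ae hone]

namespace IsUnitarilyInvariant

variable [DecidableEq ι]

theorem fourthMoment_eq_integral_mulVec (hμ : IsUnitarilyInvariant μ) {U : Matrix ι ι ℂ}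
    (hU : U ∈ unitaryGroup ι ℂ) (i j k l : ι) :
    fourthMoment μ i j k l = ∫ ψ, quarticMonomial i j k l (U *ᵥ ψ) ∂μ := by
  rw [← integral_map (by fun_prop : Continuous (U *ᵥ ·)).aemeasurable, hμ U hU]
  · rfl
  · exact (continuous_quarticMonomial i j k l).aestronglyMeasurable

theorem fourthMoment_perm (hμ : IsUnitarilyInvariant μ) (σ : Equiv.Perm ι) (i j k l : ι) :
    fourthMoment μ (σ i) (σ j) (σ k) (σ l) = fourthMoment μ i j k l := by
  rw [hμ.fourthMoment_eq_integral_mulVec (permMatrix_mem_unitaryGroup σ) i j k l]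
  simp only [permMatrix_mulVec]
  rfl

theorem fourthMoment_eq_phase_mul (hμ : IsUnitarilyInvariant μ) {θ : ι → ℂ}
    (hθ : ∀ t, conj (θ t) * θ t = 1) (i j k l : ι) :
    fourthMoment μ i j k l = θ i * θ j * conj (θ k) * conj (θ l) * fourthMoment μ i j k l := by
  conv_lhs => rw [hμ.fourthMoment_eq_integral_mulVec (diagonal_mem_unitaryGroup hθ)]
  rw [fourthMoment, ← integral_const_mul]
  congr 1 with ψ
  simp only [quarticMonomial, mulVec_diagonal, map_mul]
  ring

theorem fourthMoment_eq_zero (hμ : IsUnitarilyInvariant μ) {i j k l : ι}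
    (h : ¬((i = k ∧ j = l) ∨ (i = l ∧ j = k))) : fourthMoment μ i j k l = 0 := by
  -- the phase `I` at `x` multiplies the moment by `I ^ (#x in [i, j] - #x in [k, l])`
  have key : ∀ x, (if i = x then Complex.I else 1) * (if j = x then Complex.I else 1) *
      conj (if k = x then Complex.I else 1) * conj (if l = x then Complex.I else 1) ≠ 1 →
      fourthMoment μ i j k l = 0 := by
    intro x hx
    have hθ : ∀ t, conj (if t = x then Complex.I else 1) *
        (if t = x then Complex.I else 1) = 1 := by
      intro t; split_ifs <;> simp
    exact (mul_left_eq_self₀.1 (hμ.fourthMoment_eq_phase_mul hθ i j k l).symm).resolve_left hx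
  have hI : Complex.I ≠ 1 := fun h => by simpa using congrArg Complex.im h
  by_cases hi : i = k ∨ i = l
  · refine key j ?_
    rcases hi with rfl | rfl <;> by_cases hji : j = i <;> simp_all [Ne.symm]
  · push Not at hi
    refine key i ?_
    by_cases hji : j = i <;> simp [hji, hI, Ne.symm hi.1, Ne.symm hi.2]
    norm_num

theorem fourthMoment_self_eq_two_mul (hμ : IsUnitarilyInvariant μ) [IsFiniteMeasure μ]
    (hsupp : ∀ᵐ ψ ∂μ, ∑ x, Complex.normSq (ψ x) = 1) {x y : ι} (hxy : x ≠ y) :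
    fourthMoment μ x x x x = 2 * fourthMoment μ x y x y := by
  -- The reflection in the unit vector `(3/5, 4/5)` of the `x, y`-plane sends `ψ x` to
  -- `a * ψ x + b * ψ y` with `(a, b) = (7/25, -24/25)`, and `1 - a⁴ - b⁴ = 2 a² b² ≠ 0`.
  set u : ι → ℂ := Pi.single x (3 / 5) + Pi.single y (4 / 5)
  have hu : star u ⬝ᵥ u = 1 := by
    simp [u, dotProduct_add, hxy, hxy.symm]
    norm_num
  have hHx : ∀ ψ, ((1 - (2 : ℂ) • vecMulVec u (star u)) *ᵥ ψ) x =
      7 / 25 * ψ x - 24 / 25 * ψ y := by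
    intro ψ
    simp [u, sub_mulVec, smul_mulVec, vecMulVec_mulVec, add_dotProduct, single_dotProduct, hxy]
    ring
  let c : ι → ℂ := fun t => if t = x then 7 / 25 else -24 / 25
  have hexpand : ∀ ψ, quarticMonomial x x x x ((1 - (2 : ℂ) • vecMulVec u (star u)) *ᵥ ψ) =
      ∑ p ∈ {x, y}, ∑ q ∈ {x, y}, ∑ r ∈ {x, y}, ∑ s ∈ {x, y},
        c p * c q * c r * c s * quarticMonomial p q r s ψ := by
    intro ψ
    simp only [quarticMonomial, hHx, Finset.sum_pair hxy, c, if_pos, if_neg hxy.symm, map_sub,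
      map_mul, map_div₀, map_ofNat]
    ring
  have hint := integrable_quarticMonomial hsupp
  have h := hμ.fourthMoment_eq_integral_mulVec
    (one_sub_two_smul_vecMulVec_mem_unitaryGroup hu) x x x x
  simp (disch := fun_prop) only [hexpand, integral_finsetSum, integral_const_mul,
    ← fourthMoment.eq_1] at h
  simp [Finset.sum_pair hxy, c, hxy, hxy.symm, hμ.fourthMoment_eq_zero] at h
  have hxyyx := fourthMoment_comm_right μ x y y x
  have hyxxy := fourthMoment_comm_left μ y x x y
  have hyxyx : fourthMoment μ y x y x = fourthMoment μ x y x y := by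
    rw [fourthMoment_comm_left, fourthMoment_comm_right]
  have hyyyy := hμ.fourthMoment_perm (Equiv.swap x y) x x x x
  simp only [Equiv.swap_apply_left] at hyyyy
  rw [hxyyx, hyxxy, hyxyx, hyyyy] at h
  linear_combination (390625 / 56448 : ℂ) * h

theorem fourthMoment_eq (hμ : IsUnitarilyInvariant μ) [IsProbabilityMeasure μ]
    (hsupp : ∀ᵐ ψ ∂μ, ∑ x, Complex.normSq (ψ x) = 1) (i j k l : ι) :
    fourthMoment μ i j k l =
      ((if i = k ∧ j = l then 1 else 0) + (if i = l ∧ j = k then 1 else 0)) /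
        ((Fintype.card ι : ℂ) * (Fintype.card ι + 1)) := by
  set d : ℂ := (Fintype.card ι : ℂ)
  obtain ⟨m, hm⟩ : ∃ m, ∀ x y,
      fourthMoment μ x y x y = (1 + if x = y then 1 else 0) * m / 2 := by
    refine ⟨fourthMoment μ i i i i, fun x y => ?_⟩
    have hself : ∀ z, fourthMoment μ z z z z = fourthMoment μ i i i i := fun z => by
      simpa using hμ.fourthMoment_perm (Equiv.swap i z) i i i i
    by_cases hxy : x = y
    · subst hxy; rw [hself, if_pos rfl]; ring
    · rw [if_neg hxy, ← hself x, hμ.fourthMoment_self_eq_two_mul hsupp hxy]; ring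
  have hnorm : d * (d + 1) * m / 2 = 1 := by
    have h := sum_sum_fourthMoment_eq_one hsupp
    simp [hm, add_mul, add_div, Finset.sum_add_distrib, ite_div] at h
    linear_combination h
  have hd : d * (d + 1) ≠ 0 := by
    rintro h0
    simp [h0] at hnorm
  have hm_val : m = 2 / (d * (d + 1)) := by
    rw [eq_div_iff hd]
    linear_combination 2 * hnorm
  by_cases h1 : i = k ∧ j = l
  · obtain ⟨rfl, rfl⟩ := h1
    by_cases hij : i = j <;> simp [hm, hm_val, hij] <;> field_simp
  by_cases h2 : i = l ∧ j = k
  · obtain ⟨rfl, rfl⟩ := h2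
    have hij : i ≠ j := fun h => h1 ⟨h, h.symm⟩
    rw [fourthMoment_comm_right, hm, hm_val, if_neg hij, if_neg h1, if_pos ⟨rfl, rfl⟩]
    ring
  rw [hμ.fourthMoment_eq_zero (not_or.2 ⟨h1, h2⟩)]
  simp [h1, h2]

end IsUnitarilyInvariant

theorem trace_rhoA_mul_rhoA {dA dB : ℕ} (ψ : Fin dA × Fin dB → ℂ) :
    (rhoA ψ * rhoA ψ).trace =
      ∑ a, ∑ a', ∑ b, ∑ b', quarticMonomial (a, b) (a', b') (a', b) (a, b') ψ := by
  simp only [trace, diag, mul_apply, rhoA, of_apply, Finset.sum_mul_sum]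
  refine Finset.sum_congr rfl fun a _ => Finset.sum_congr rfl fun a' _ =>
    Finset.sum_congr rfl fun b _ => Finset.sum_congr rfl fun b' _ => ?_
  simp only [quarticMonomial, Complex.star_def]
  ring

theorem haar_average_purity (dA dB : ℕ) (hA : 0 < dA) (hB : 0 < dB)
    (μ : Measure ((Fin dA × Fin dB) → ℂ)) [IsProbabilityMeasure μ]
    (hsupp : ∀ᵐ ψ ∂μ, ∑ x, Complex.normSq (ψ x) = 1)
    (hinv : ∀ U ∈ Matrix.unitaryGroup (Fin dA × Fin dB) ℂ,
      Measure.map (fun ψ => U.mulVec ψ) μ = μ) :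
    ∫ ψ, ((rhoA ψ * rhoA ψ).trace).re ∂μ = ((dA : ℝ) + dB) / ((dA : ℝ) * dB + 1) := by
  have hint := integrable_quarticMonomial hsupp
  have hterm : ∀ a a' b b', fourthMoment μ (a, b) (a', b') (a', b) (a, b') =
      ((if a = a' then 1 else 0) + (if b = b' then 1 else 0)) /
        ((dA * dB : ℂ) * (dA * dB + 1)) := by
    intro a a' b b'
    simp only [IsUnitarilyInvariant.fourthMoment_eq hinv hsupp, Prod.mk.injEq, and_true, true_and,
      and_iff_left_of_imp Eq.symm, Fintype.card_prod, Fintype.card_fin, Nat.cast_mul]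
  have hpurity : ∫ ψ, (rhoA ψ * rhoA ψ).trace ∂μ = (((dA + dB) / (dA * dB + 1) : ℝ) : ℂ) := by
    simp (disch := fun_prop) only [trace_rhoA_mul_rhoA, integral_finsetSum, ← fourthMoment.eq_1,
      hterm, ← Finset.sum_div]
    simp [Finset.sum_add_distrib]
    have hA' : (dA : ℂ) ≠ 0 := by exact_mod_cast hA.ne'
    have hB' : (dB : ℂ) ≠ 0 := by exact_mod_cast hB.ne'
    have hAB : (dA : ℂ) * dB + 1 ≠ 0 := by exact_mod_cast Nat.succ_ne_zero (dA * dB)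
    field_simp
    ring
  have hre := integral_re (μ := μ) (f := fun ψ => (rhoA ψ * rhoA ψ).trace)
    (by simp only [trace_rhoA_mul_rhoA]; fun_prop)
  simp only [RCLike.re_to_complex] at hre
  rw [hre, hpurity, Complex.ofReal_re]
end

section
/- Asymptotic purity formula via the cycle lemma: for d_A = d_B = d, the sum (1/(α!·D))·Σ_{σ∈S_α} d^{ξ(στ)+ξ(σ)} with D = binom(d² + α − 1, α) equals Cat_α · d^{1−α} + O(d^{−(α+1)}) as d → ∞ for fixed α. -/
open Equiv Equiv.Perm Finset Function
open scoped Nat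

namespace Equiv.Perm

section Period

variable {α : Type*} (σ : Perm α) (x : α)

theorem minimalPeriod_pos [Finite α] : 0 < minimalPeriod σ x :=
  minimalPeriod_pos_of_mem_periodicPts (σ.injective.mem_periodicPts x)

theorem pow_minimalPeriod_apply : (σ ^ minimalPeriod σ x) x = x := by
  rw [coe_pow]; exact iterate_minimalPeriod

variable {σ x}

theorem pow_apply_injOn_minimalPeriod {i j : ℕ} (hi : i < minimalPeriod σ x)
    (hj : j < minimalPeriod σ x) (h : (σ ^ i) x = (σ ^ j) x) : i = j := by
  rw [coe_pow, coe_pow] at h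
  exact iterate_injOn_Iio_minimalPeriod hi hj h

theorem pow_apply_ne_self_of_lt_minimalPeriod {i : ℕ} (hi : 0 < i)
    (hiP : i < minimalPeriod σ x) : (σ ^ i) x ≠ x := by
  rw [coe_pow]; exact not_isPeriodicPt_of_pos_of_lt_minimalPeriod hi.ne' hiP

theorem pow_sub_apply_pow_apply {k : ℕ} (hk : k ≤ minimalPeriod σ x) :
    (σ ^ (minimalPeriod σ x - k)) ((σ ^ k) x) = x := by
  rw [← mul_apply, ← pow_add, Nat.sub_add_cancel hk, pow_minimalPeriod_apply]

theorem sameCycle_iff_exists_pow_lt_minimalPeriod [Finite α] {y : α} :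
    σ.SameCycle x y ↔ ∃ i < minimalPeriod σ x, (σ ^ i) x = y := by
  refine ⟨fun h => ?_, fun ⟨i, _, hi⟩ => ⟨i, by rw [zpow_natCast, hi]⟩⟩
  obtain ⟨n, -, rfl⟩ := h.exists_pow_eq'
  refine ⟨n % minimalPeriod σ x, Nat.mod_lt _ (minimalPeriod_pos σ x), ?_⟩
  rw [coe_pow, coe_pow, iterate_mod_minimalPeriod_eq]

theorem SameCycle.minimalPeriod_eq [Finite α] {y : α} (h : σ.SameCycle x y) :
    minimalPeriod σ x = minimalPeriod σ y := by
  obtain ⟨n, -, rfl⟩ := h.exists_pow_eq'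
  rw [coe_pow, minimalPeriod_apply_iterate (σ.injective.mem_periodicPts x)]

theorem minimalPeriod_eq_of_pow_apply [Finite α] {n : ℕ} (hn : 0 < n) (hx : (σ ^ n) x = x)
    (hlt : ∀ i, 0 < i → i < n → (σ ^ i) x ≠ x) : minimalPeriod σ x = n := by
  rw [coe_pow] at hx
  refine le_antisymm (IsPeriodicPt.minimalPeriod_le hn hx) (not_lt.1 fun h => ?_)
  exact hlt _ (minimalPeriod_pos σ x) h (pow_minimalPeriod_apply σ x)

theorem SameCycle.mem_of_mapsTo [Finite α] {y : α} {s : Set α} (hs : Set.MapsTo σ s s)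
    (h : σ.SameCycle x y) (hx : x ∈ s) : y ∈ s := by
  obtain ⟨n, -, rfl⟩ := h.exists_pow_eq'
  rw [coe_pow]
  exact hs.iterate n hx

end Period

section Swap

variable {α : Type*} [DecidableEq α] {σ : Perm α} {a b x : α}

theorem swap_mul_pow_apply_of_forall_ne {i : ℕ}
    (h : ∀ j, 0 < j → j ≤ i → (σ ^ j) x ≠ a ∧ (σ ^ j) x ≠ b) :
    ((swap a b * σ) ^ i) x = (σ ^ i) x := by
  induction i with
  | zero => rfl
  | succ i ih =>
    obtain ⟨ha, hb⟩ := h (i + 1) i.succ_pos le_rfl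
    rw [pow_succ', mul_apply, ih fun j hj hji => h j hj (by omega), mul_apply,
      ← mul_apply σ, ← pow_succ', swap_apply_of_ne_of_ne ha hb]

theorem swap_mul_pow_apply_of_lt {k : ℕ} (hkP : k < minimalPeriod σ a) {i : ℕ} (hi : i < k) :
    ((swap a ((σ ^ k) a) * σ) ^ i) a = (σ ^ i) a := by
  refine swap_mul_pow_apply_of_forall_ne fun j hj hji =>
    ⟨pow_apply_ne_self_of_lt_minimalPeriod hj (by omega), fun h => ?_⟩
  have := pow_apply_injOn_minimalPeriod (by omega) hkP h
  omega

variable [Finite α]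

theorem sameCycle_swap_mul_of_not_sameCycle (hab : ¬σ.SameCycle a b) :
    (swap a b * σ).SameCycle a b := by
  obtain ⟨p, hp⟩ := Nat.exists_eq_add_one_of_ne_zero (minimalPeriod_pos σ a).ne'
  have hpow : ((swap a b * σ) ^ p) a = (σ ^ p) a :=
    swap_mul_pow_apply_of_forall_ne fun j hj hjp =>
      ⟨pow_apply_ne_self_of_lt_minimalPeriod hj (by omega), fun h => hab ⟨j, by simp [h]⟩⟩
  refine ⟨((p + 1 : ℕ) : ℤ), ?_⟩
  rw [zpow_natCast, pow_succ', mul_apply, hpow, mul_apply, ← mul_apply σ, ← pow_succ', ← hp,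
    pow_minimalPeriod_apply, swap_apply_left]

theorem sameCycle_swap_mul_apply (hab : ¬σ.SameCycle a b) (z : α) :
    (swap a b * σ).SameCycle z (σ z) := by
  have hstep : (swap a b * σ).SameCycle z (swap a b (σ z)) := ⟨1, by simp⟩
  rcases eq_or_ne (σ z) a with hza | hza
  · rw [hza, swap_apply_left] at hstep
    exact hza ▸ hstep.trans (sameCycle_swap_mul_of_not_sameCycle hab).symm
  rcases eq_or_ne (σ z) b with hzb | hzb
  · rw [hzb, swap_apply_right] at hstep
    exact hzb ▸ hstep.trans (sameCycle_swap_mul_of_not_sameCycle hab)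
  rwa [swap_apply_of_ne_of_ne hza hzb] at hstep

theorem SameCycle.swap_mul_of_not_sameCycle {y : α} (hab : ¬σ.SameCycle a b)
    (h : σ.SameCycle x y) : (swap a b * σ).SameCycle x y := by
  obtain ⟨n, -, rfl⟩ := h.exists_pow_eq'
  clear h
  induction n with
  | zero => rfl
  | succ n ih => rw [pow_succ', mul_apply]; exact ih.trans (sameCycle_swap_mul_apply hab _)

theorem sameCycle_swap_mul_iff_of_not_sameCycle (hab : ¬σ.SameCycle a b) {x y : α} :
    (swap a b * σ).SameCycle x y ↔ σ.SameCycle x y ∨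
      ((σ.SameCycle a x ∨ σ.SameCycle b x) ∧ (σ.SameCycle a y ∨ σ.SameCycle b y)) := by
  constructor
  · intro h
    refine h.mem_of_mapsTo (s := {z | σ.SameCycle x z ∨
      ((σ.SameCycle a x ∨ σ.SameCycle b x) ∧ (σ.SameCycle a z ∨ σ.SameCycle b z))})
      (fun z hz => ?_) (Or.inl (SameCycle.refl _ _))
    have hz' : σ.SameCycle z (σ z) := ⟨1, by simp⟩
    simp only [Set.mem_ofPred_eq, mul_apply] at hz ⊢
    rcases eq_or_ne (σ z) a with hza | hza
    · rw [hza, swap_apply_left]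
      rw [hza] at hz'
      refine Or.inr ⟨?_, Or.inr (SameCycle.refl _ _)⟩
      rcases hz with hz | ⟨hx, -⟩
      exacts [Or.inl (hz.trans hz').symm, hx]
    rcases eq_or_ne (σ z) b with hzb | hzb
    · rw [hzb, swap_apply_right]
      rw [hzb] at hz'
      refine Or.inr ⟨?_, Or.inl (SameCycle.refl _ _)⟩
      rcases hz with hz | ⟨hx, -⟩
      exacts [Or.inr (hz.trans hz').symm, hx]
    rw [swap_apply_of_ne_of_ne hza hzb]
    rcases hz with hz | ⟨hx, hz | hz⟩
    exacts [Or.inl (hz.trans hz'), Or.inr ⟨hx, Or.inl (hz.trans hz')⟩,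
      Or.inr ⟨hx, Or.inr (hz.trans hz')⟩]
  · have hab' := sameCycle_swap_mul_of_not_sameCycle hab
    have key : ∀ {z}, σ.SameCycle a z ∨ σ.SameCycle b z → (swap a b * σ).SameCycle a z :=
      fun {z} hz => hz.elim (·.swap_mul_of_not_sameCycle hab)
        (hab'.trans <| ·.swap_mul_of_not_sameCycle hab)
    rintro (h | ⟨hx, hy⟩)
    exacts [h.swap_mul_of_not_sameCycle hab, (key hx).symm.trans (key hy)]

variable {k : ℕ}

theorem minimalPeriod_swap_mul_pow_apply_left (hk : 0 < k) (hkP : k < minimalPeriod σ a) :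
    minimalPeriod (swap a ((σ ^ k) a) * σ) a = k := by
  obtain ⟨p, rfl⟩ := Nat.exists_eq_add_one_of_ne_zero hk.ne'
  refine minimalPeriod_eq_of_pow_apply hk ?_ fun i hi hik => ?_
  · rw [pow_succ', mul_apply, swap_mul_pow_apply_of_lt hkP p.lt_succ_self, mul_apply,
      ← mul_apply σ, ← pow_succ', swap_apply_right]
  · rw [swap_mul_pow_apply_of_lt hkP hik]
    exact pow_apply_ne_self_of_lt_minimalPeriod hi (by omega)

theorem not_sameCycle_swap_mul_pow_apply (hk : 0 < k) (hkP : k < minimalPeriod σ a) :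
    ¬(swap a ((σ ^ k) a) * σ).SameCycle a ((σ ^ k) a) := by
  rw [sameCycle_iff_exists_pow_lt_minimalPeriod, minimalPeriod_swap_mul_pow_apply_left hk hkP]
  rintro ⟨i, hik, h⟩
  rw [swap_mul_pow_apply_of_lt hkP hik] at h
  have := pow_apply_injOn_minimalPeriod (by omega) hkP h
  omega

theorem swap_mul_pow_apply_of_lt_sub (hk : 0 < k) (hkP : k < minimalPeriod σ a) {i : ℕ}
    (hi : i < minimalPeriod σ a - k) :
    ((swap a ((σ ^ k) a) * σ) ^ i) ((σ ^ k) a) = (σ ^ i) ((σ ^ k) a) := by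
  have hP : minimalPeriod σ ((σ ^ k) a) = minimalPeriod σ a :=
    (SameCycle.minimalPeriod_eq ⟨k, by simp⟩).symm
  have := swap_mul_pow_apply_of_lt (a := (σ ^ k) a) (by rw [hP]; omega) hi
  rwa [pow_sub_apply_pow_apply hkP.le, swap_comm] at this

theorem minimalPeriod_swap_mul_pow_apply_right (hk : 0 < k) (hkP : k < minimalPeriod σ a) :
    minimalPeriod (swap a ((σ ^ k) a) * σ) ((σ ^ k) a) = minimalPeriod σ a - k := by
  have hP : minimalPeriod σ ((σ ^ k) a) = minimalPeriod σ a :=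
    (SameCycle.minimalPeriod_eq ⟨k, by simp⟩).symm
  have := minimalPeriod_swap_mul_pow_apply_left (a := (σ ^ k) a) (Nat.sub_pos_of_lt hkP)
    (by rw [hP]; omega)
  rwa [pow_sub_apply_pow_apply hkP.le, swap_comm] at this

end Swap

section CycleMins

variable {α : Type*} [Fintype α] [LinearOrder α] {σ : Perm α} {a b x y : α}

/-- Cycles are counted through their least elements, so that merging two cycles erases one
element. -/
def cycleMins (σ : Perm α) : Finset α := {x | ∀ y, σ.SameCycle x y → x ≤ y}

theorem mem_cycleMins : x ∈ cycleMins σ ↔ ∀ y, σ.SameCycle x y → x ≤ y := by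
  simp [cycleMins]

theorem exists_mem_cycleMins_sameCycle (σ : Perm α) (x : α) :
    ∃ m ∈ cycleMins σ, σ.SameCycle x m := by
  obtain ⟨m, hm, hmin⟩ :=
    exists_min_image ({y | σ.SameCycle x y} : Finset α) id ⟨x, by simp [SameCycle.refl]⟩
  simp only [mem_filter, mem_univ, true_and, id] at hm hmin
  exact ⟨m, mem_cycleMins.2 fun y hy => hmin y (hm.trans hy), hm⟩

theorem eq_of_mem_cycleMins (hx : x ∈ cycleMins σ) (hy : y ∈ cycleMins σ)
    (h : σ.SameCycle x y) : x = y :=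
  le_antisymm (mem_cycleMins.1 hx y h) (mem_cycleMins.1 hy x h.symm)

theorem cycleMins_swap_mul_eq_erase (hab : ¬σ.SameCycle a b) {ma mb : α}
    (hma : ma ∈ cycleMins σ) (hmb : mb ∈ cycleMins σ) (ha : σ.SameCycle a ma)
    (hb : σ.SameCycle b mb) (hlt : ma < mb) :
    cycleMins (swap a b * σ) = (cycleMins σ).erase mb := by
  ext x
  rw [mem_erase, mem_cycleMins, mem_cycleMins]
  constructor
  · intro hx
    refine ⟨?_, fun y hy => hx y (hy.swap_mul_of_not_sameCycle hab)⟩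
    rintro rfl
    have : (swap a b * σ).SameCycle x ma :=
      ((hb.symm.swap_mul_of_not_sameCycle hab).trans
        (sameCycle_swap_mul_of_not_sameCycle hab).symm).trans (ha.swap_mul_of_not_sameCycle hab)
    exact (hx ma this).not_gt hlt
  · rintro ⟨hne, hx⟩ y hy
    rcases (sameCycle_swap_mul_iff_of_not_sameCycle hab).1 hy with hy | ⟨hxab, hyab⟩
    · exact hx y hy
    have hxa : x = ma := by
      rcases hxab with hxa | hxb
      · exact eq_of_mem_cycleMins (mem_cycleMins.2 hx) hma (hxa.symm.trans ha)
      · exact absurd (eq_of_mem_cycleMins (mem_cycleMins.2 hx) hmb (hxb.symm.trans hb)) hne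
    subst hxa
    rcases hyab with hya | hyb
    · exact mem_cycleMins.1 hma y (ha.symm.trans hya)
    · exact hlt.le.trans (mem_cycleMins.1 hmb y (hb.symm.trans hyb))

theorem card_cycleMins_swap_mul_add_one (hab : ¬σ.SameCycle a b) :
    #(cycleMins (swap a b * σ)) + 1 = #(cycleMins σ) := by
  obtain ⟨ma, hma, ha⟩ := exists_mem_cycleMins_sameCycle σ a
  obtain ⟨mb, hmb, hb⟩ := exists_mem_cycleMins_sameCycle σ b
  have hne : ma ≠ mb := fun h => hab (ha.trans (h ▸ hb.symm))
  rcases hne.lt_or_gt with hlt | hlt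
  · rw [cycleMins_swap_mul_eq_erase hab hma hmb ha hb hlt, card_erase_add_one hmb]
  · rw [swap_comm, cycleMins_swap_mul_eq_erase (fun h => hab h.symm) hmb hma hb ha hlt,
      card_erase_add_one hma]

theorem card_cycleMins_swap_mul_of_sameCycle (h : σ.SameCycle a b) (hab : a ≠ b) :
    #(cycleMins (swap a b * σ)) = #(cycleMins σ) + 1 := by
  obtain ⟨k, hkP, rfl⟩ := sameCycle_iff_exists_pow_lt_minimalPeriod.1 h
  have hk : 0 < k := Nat.pos_of_ne_zero fun hk => hab (by simp [hk])
  have := card_cycleMins_swap_mul_add_one (not_sameCycle_swap_mul_pow_apply hk hkP)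
  rwa [← mul_assoc, swap_mul_self, one_mul, eq_comm] at this

theorem filter_notMem_support_cycleMins (σ : Perm α) :
    {x ∈ cycleMins σ | x ∉ σ.support} = σ.supportᶜ := by
  ext x
  simp only [mem_filter, mem_compl, and_iff_right_iff_imp, notMem_support]
  exact fun hx => mem_cycleMins.2 fun y hy => (hy.eq_of_left hx).le

theorem card_filter_mem_support_cycleMins (σ : Perm α) :
    #{x ∈ cycleMins σ | x ∈ σ.support} = #σ.cycleFactorsFinset := by
  refine card_bij (fun x _ => σ.cycleOf x) (fun x hx => ?_) (fun x hx y hy hxy => ?_)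
    fun c hc => ?_
  · exact cycleOf_mem_cycleFactorsFinset_iff.2 (mem_filter.1 hx).2
  · simp only [mem_filter] at hx hy
    have hy' : y ∈ (σ.cycleOf y).support :=
      mem_support_cycleOf_iff.2 ⟨SameCycle.refl _ _, hy.2⟩
    exact eq_of_mem_cycleMins hx.1 hy.1 (mem_support_cycleOf_iff.1 (hxy ▸ hy')).1
  · obtain ⟨x, hx⟩ := (mem_cycleFactorsFinset_iff.1 hc).1.nonempty_support
    have hxσ := mem_cycleFactorsFinset_support_le hc hx
    obtain ⟨m, hm, hxm⟩ := exists_mem_cycleMins_sameCycle σ x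
    refine ⟨m, mem_filter.2 ⟨hm, hxm.mem_support_iff.1 hxσ⟩, ?_⟩
    rw [← hxm.cycleOf_eq, cycle_is_cycleOf hx hc]

theorem cycleType_card_add_card_sub_card_support (σ : Perm α) :
    Multiset.card σ.cycleType + (Fintype.card α - #σ.support) = #(cycleMins σ) := by
  rw [← card_filter_add_card_filter_not (s := cycleMins σ) (p := (· ∈ σ.support)),
    filter_notMem_support_cycleMins, card_compl, card_filter_mem_support_cycleMins,
    cycleType_def, Multiset.card_map]
  rfl

end CycleMins

end Equiv.Perm

section CycleCount

variable {n : ℕ} {σ : Perm (Fin n)} {a b : Fin n}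

theorem cycleCount_eq_card_cycleMins (σ : Perm (Fin n)) : cycleCount σ = #(cycleMins σ) := by
  rw [← cycleType_card_add_card_sub_card_support, Fintype.card_fin, cycleCount]

theorem cycleCount_swap_mul_add_one (hab : ¬σ.SameCycle a b) :
    cycleCount (swap a b * σ) + 1 = cycleCount σ := by
  simp only [cycleCount_eq_card_cycleMins, card_cycleMins_swap_mul_add_one hab]

theorem cycleCount_swap_mul_of_sameCycle (h : σ.SameCycle a b) (hab : a ≠ b) :
    cycleCount (swap a b * σ) = cycleCount σ + 1 := by
  simp only [cycleCount_eq_card_cycleMins, card_cycleMins_swap_mul_of_sameCycle h hab]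

/-- `π` acting on `1, …, n`, with `0` fixed. -/
def succPerm (π : Perm (Fin n)) : Perm (Fin (n + 1)) := π.extendDomain (finSuccAboveEquiv 0)

@[simp] theorem succPerm_apply_zero (π : Perm (Fin n)) : succPerm π 0 = 0 :=
  extendDomain_apply_not_subtype _ _ (by simp)

@[simp] theorem succPerm_apply_succ (π : Perm (Fin n)) (x : Fin n) :
    succPerm π x.succ = (π x).succ := by
  have := extendDomain_apply_image π (finSuccAboveEquiv 0) x
  simpa [succPerm, finSuccAboveEquiv_apply] using this

theorem succPerm_mul (π π' : Perm (Fin n)) : succPerm (π * π') = succPerm π * succPerm π' :=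
  (extendDomain_mul _ _ _).symm

theorem succPerm_pow_apply_succ (π : Perm (Fin n)) (k : ℕ) (x : Fin n) :
    (succPerm π ^ k) x.succ = ((π ^ k) x).succ := by
  induction k with
  | zero => rfl
  | succ k ih => rw [pow_succ', mul_apply, ih, succPerm_apply_succ, pow_succ', mul_apply]

theorem decomposeFin_symm_eq_swap_mul (j : Fin (n + 1)) (π : Perm (Fin n)) :
    decomposeFin.symm (j, π) = swap 0 j * succPerm π := by
  ext x
  cases x using Fin.cases <;> simp

theorem cycleCount_succPerm (π : Perm (Fin n)) : cycleCount (succPerm π) = cycleCount π + 1 := by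
  have := π.support.card_le_univ
  simp only [cycleCount, succPerm, cycleType_extendDomain, card_support_extend_domain,
    Fintype.card_fin] at this ⊢
  omega

theorem cycleCount_decomposeFin_symm_of_ne_zero (π : Perm (Fin n)) {j : Fin (n + 1)}
    (hj : j ≠ 0) : cycleCount (decomposeFin.symm (j, π)) = cycleCount π := by
  have := cycleCount_swap_mul_add_one (σ := succPerm π) fun h =>
    hj (h.eq_of_left (succPerm_apply_zero π)).symm
  rw [← decomposeFin_symm_eq_swap_mul, cycleCount_succPerm] at this
  omega

theorem minimalPeriod_succPerm_succ (π : Perm (Fin n)) (x : Fin n) :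
    minimalPeriod (succPerm π) x.succ = minimalPeriod π x := by
  rw [minimalPeriod_eq_minimalPeriod_iff]
  intro k
  simp only [IsPeriodicPt, IsFixedPt, ← coe_pow, succPerm_pow_apply_succ, Fin.succ_inj]

theorem succPerm_mul_finRotate (π : Perm (Fin (n + 1))) :
    succPerm π * finRotate (n + 2) = swap 0 (π 0).succ * succPerm (π * finRotate (n + 1)) := by
  rw [finRotate_succ_eq_decomposeFin, decomposeFin_symm_eq_swap_mul, ← mul_assoc,
    mul_swap_eq_swap_mul, succPerm_apply_zero, ← Fin.succ_zero_eq_one, succPerm_apply_succ,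
    mul_assoc, succPerm_mul]

end CycleCount

/-- Genus zero in the sense of Euler's formula `ξ(σ τ) + ξ(σ) = n + 1 - 2 g`. -/
def IsGenusZero {n : ℕ} (σ : Perm (Fin n)) : Prop :=
  cycleCount (σ * finRotate n) + cycleCount σ = n + 1

noncomputable def markedCycleLength {m : ℕ} (σ : Perm (Fin (m + 1))) : ℕ :=
  minimalPeriod (σ * finRotate (m + 1)) (Fin.last m)

section Recursion

variable {m : ℕ} (π : Perm (Fin (m + 1)))

theorem cycleCount_succPerm_mul_finRotate :
    cycleCount (succPerm π * finRotate (m + 2)) = cycleCount (π * finRotate (m + 1)) := by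
  have hne : ¬(succPerm (π * finRotate (m + 1))).SameCycle 0 (π 0).succ := fun h =>
    Fin.succ_ne_zero _ (h.eq_of_left (succPerm_apply_zero _)).symm
  have := cycleCount_swap_mul_add_one hne
  rw [← succPerm_mul_finRotate, cycleCount_succPerm] at this
  omega

theorem succPerm_mul_finRotate_apply_last :
    (succPerm π * finRotate (m + 2)) (Fin.last (m + 1)) = 0 := by
  rw [mul_apply, finRotate_last, succPerm_apply_zero]

/-- Removing the transposition `(0 (π 0).succ)` splits off the fixed point `0`. -/
theorem minimalPeriod_succPerm_mul_finRotate_zero :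
    minimalPeriod (succPerm π * finRotate (m + 2)) 0 = markedCycleLength π + 1 := by
  set R := succPerm π * finRotate (m + 2) with hR
  have hR0 : (R ^ 1) 0 = (π 0).succ := by
    rw [pow_one, mul_apply, finRotate_apply, zero_add, ← Fin.succ_zero_eq_one,
      succPerm_apply_succ]
  have hP : 1 < minimalPeriod R 0 := by
    refine lt_of_le_of_ne (minimalPeriod_pos R 0) fun h => Fin.succ_ne_zero (π 0) ?_
    have := pow_minimalPeriod_apply R 0
    rwa [← h, hR0] at this
  have := minimalPeriod_swap_mul_pow_apply_right one_pos hP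
  have hsplit : swap 0 (π 0).succ * R = succPerm (π * finRotate (m + 1)) := by
    rw [hR, succPerm_mul_finRotate, ← mul_assoc, swap_mul_self, one_mul]
  have hlast : (π * finRotate (m + 1)).SameCycle (Fin.last m) (π 0) :=
    ⟨1, by rw [zpow_one, mul_apply, finRotate_last]⟩
  rw [hR0, hsplit, minimalPeriod_succPerm_succ, ← hlast.minimalPeriod_eq] at this
  rw [markedCycleLength]
  omega

theorem succPerm_mul_finRotate_pow_markedCycleLength :
    ((succPerm π * finRotate (m + 2)) ^ markedCycleLength π) 0 = Fin.last (m + 1) := by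
  refine (succPerm π * finRotate (m + 2)).injective ?_
  rw [succPerm_mul_finRotate_apply_last, ← mul_apply, ← pow_succ',
    ← minimalPeriod_succPerm_mul_finRotate_zero, pow_minimalPeriod_apply]

theorem decomposeFin_symm_mul_finRotate (j : Fin (m + 2)) :
    decomposeFin.symm (j, π) * finRotate (m + 2) =
      swap 0 j * (succPerm π * finRotate (m + 2)) := by
  rw [decomposeFin_symm_eq_swap_mul, mul_assoc]

variable {π}

theorem cycleCount_decomposeFin_symm_pow {i : ℕ} (hi : i ≤ markedCycleLength π) :
    cycleCount (decomposeFin.symm (((succPerm π * finRotate (m + 2)) ^ i) 0, π) *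
          finRotate (m + 2)) +
        cycleCount (decomposeFin.symm (((succPerm π * finRotate (m + 2)) ^ i) 0, π)) =
      cycleCount (π * finRotate (m + 1)) + cycleCount π + 1 := by
  rw [decomposeFin_symm_mul_finRotate]
  rcases Nat.eq_zero_or_pos i with rfl | hi0
  · simp only [pow_zero, one_apply, swap_self, ← Perm.one_def, one_mul,
      cycleCount_succPerm_mul_finRotate, decomposeFin_symm_eq_swap_mul, cycleCount_succPerm,
      add_assoc]
  have hiP : i < minimalPeriod (succPerm π * finRotate (m + 2)) 0 := by
    rw [minimalPeriod_succPerm_mul_finRotate_zero]; omega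
  rw [cycleCount_swap_mul_of_sameCycle ⟨i, by simp⟩
      (pow_apply_ne_self_of_lt_minimalPeriod hi0 hiP).symm,
    cycleCount_decomposeFin_symm_of_ne_zero _ (pow_apply_ne_self_of_lt_minimalPeriod hi0 hiP),
    cycleCount_succPerm_mul_finRotate]
  ring

theorem markedCycleLength_decomposeFin_symm_pow {i : ℕ} (hi : i ≤ markedCycleLength π) :
    markedCycleLength (decomposeFin.symm (((succPerm π * finRotate (m + 2)) ^ i) 0, π)) =
      markedCycleLength π + 1 - i := by
  have hP := minimalPeriod_succPerm_mul_finRotate_zero π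
  have hlast := succPerm_mul_finRotate_pow_markedCycleLength π
  rw [markedCycleLength, decomposeFin_symm_mul_finRotate]
  rcases Nat.eq_zero_or_pos i with rfl | hi0
  · rw [pow_zero, one_apply, swap_self, ← Perm.one_def, one_mul, ← hP, ← hlast]
    exact (sameCycle_pow_right.2 (SameCycle.refl _ _)).minimalPeriod_eq.symm
  have hiP : i < minimalPeriod (succPerm π * finRotate (m + 2)) 0 := by omega
  have hlast' : ((swap 0 (((succPerm π * finRotate (m + 2)) ^ i) 0) *
      (succPerm π * finRotate (m + 2))) ^ (markedCycleLength π - i))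
        (((succPerm π * finRotate (m + 2)) ^ i) 0) = Fin.last (m + 1) := by
    rw [swap_mul_pow_apply_of_lt_sub hi0 hiP (by omega), ← mul_apply, ← pow_add,
      Nat.sub_add_cancel hi, hlast]
  rw [← hlast', ← (sameCycle_pow_right.2 (SameCycle.refl _ _)).minimalPeriod_eq,
    minimalPeriod_swap_mul_pow_apply_right hi0 hiP, hP]

theorem cycleCount_decomposeFin_symm_of_not_sameCycle {j : Fin (m + 2)}
    (hj : ¬(succPerm π * finRotate (m + 2)).SameCycle 0 j) :
    cycleCount (decomposeFin.symm (j, π) * finRotate (m + 2)) +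
        cycleCount (decomposeFin.symm (j, π)) + 1 =
      cycleCount (π * finRotate (m + 1)) + cycleCount π := by
  have hj0 : j ≠ 0 := by rintro rfl; exact hj (SameCycle.refl _ _)
  have := cycleCount_swap_mul_add_one hj
  rw [decomposeFin_symm_mul_finRotate, cycleCount_decomposeFin_symm_of_ne_zero _ hj0,
    ← cycleCount_succPerm_mul_finRotate]
  omega

end Recursion

section Genus

theorem cycleCount_one {n : ℕ} : cycleCount (1 : Perm (Fin n)) = n := by
  simp [cycleCount]

theorem exists_cycleCount_mul_finRotate_add_cycleCount_add_two_mul :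
    ∀ {m : ℕ} (σ : Perm (Fin (m + 1))),
      ∃ g, cycleCount (σ * finRotate (m + 1)) + cycleCount σ + 2 * g = m + 2
  | 0, σ => ⟨0, by
      rw [Subsingleton.elim (α := Perm (Fin 1)) σ 1, one_mul, finRotate_one, ← Perm.one_def,
        cycleCount_one]⟩
  | m + 1, σ => by
    show ∃ g, cycleCount (σ * finRotate (m + 2)) + cycleCount σ + 2 * g = m + 3
    obtain ⟨⟨j, π⟩, rfl⟩ := decomposeFin.symm.surjective σ
    obtain ⟨g, hg⟩ := exists_cycleCount_mul_finRotate_add_cycleCount_add_two_mul π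
    by_cases hj : (succPerm π * finRotate (m + 2)).SameCycle 0 j
    · obtain ⟨i, hi, hji⟩ := sameCycle_iff_exists_pow_lt_minimalPeriod.1 hj
      rw [minimalPeriod_succPerm_mul_finRotate_zero] at hi
      have := cycleCount_decomposeFin_symm_pow (Nat.le_of_lt_succ hi)
      rw [hji] at this
      exact ⟨g, by omega⟩
    · have := cycleCount_decomposeFin_symm_of_not_sameCycle hj
      exact ⟨g + 1, by omega⟩

/-- `j` must lie on the cycle through `0` (otherwise two cycles merge and the genus grows); at
distance `i` from `0` it cuts off a marked cycle of length `markedCycleLength π + 1 - i`. -/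
theorem isGenusZero_decomposeFin_symm_and_markedCycleLength_iff {m k : ℕ}
    {π : Perm (Fin (m + 1))} {j : Fin (m + 2)} :
    IsGenusZero (n := m + 2) (decomposeFin.symm (j, π)) ∧
        markedCycleLength (decomposeFin.symm (j, π)) = k + 1 ↔
      IsGenusZero π ∧ k ≤ markedCycleLength π ∧
        j = ((succPerm π * finRotate (m + 2)) ^ (markedCycleLength π - k)) 0 := by
  have hP := minimalPeriod_succPerm_mul_finRotate_zero π
  by_cases hj : (succPerm π * finRotate (m + 2)).SameCycle 0 j
  · obtain ⟨i, hi, rfl⟩ := sameCycle_iff_exists_pow_lt_minimalPeriod.1 hj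
    have hinj : ((succPerm π * finRotate (m + 2)) ^ i) 0 =
        ((succPerm π * finRotate (m + 2)) ^ (markedCycleLength π - k)) 0 ↔
          i = markedCycleLength π - k :=
      ⟨fun h => pow_apply_injOn_minimalPeriod hi (by omega) h, by rintro rfl; rfl⟩
    rw [IsGenusZero, IsGenusZero, cycleCount_decomposeFin_symm_pow (by omega),
      markedCycleLength_decomposeFin_symm_pow (by omega), hinj]
    omega
  · obtain ⟨g, hg⟩ := exists_cycleCount_mul_finRotate_add_cycleCount_add_two_mul π
    have := cycleCount_decomposeFin_symm_of_not_sameCycle hj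
    refine iff_of_false (fun ⟨h, _⟩ => ?_) fun ⟨_, _, h⟩ =>
      hj (by rw [h]; exact sameCycle_pow_right.2 (SameCycle.refl _ _))
    rw [IsGenusZero] at h
    omega

end Genus

section Count

instance {n : ℕ} : DecidablePred (@IsGenusZero n) := fun _ =>
  inferInstanceAs (Decidable (_ = _))

noncomputable def genusZeroCount (m k : ℕ) : ℕ :=
  #{σ : Perm (Fin (m + 1)) | IsGenusZero σ ∧ k ≤ markedCycleLength σ}

theorem markedCycleLength_pos {m : ℕ} (σ : Perm (Fin (m + 1))) : 0 < markedCycleLength σ :=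
  minimalPeriod_pos _ _

theorem markedCycleLength_le {m : ℕ} (σ : Perm (Fin (m + 1))) : markedCycleLength σ ≤ m + 1 :=
  (minimalPeriod_le_card (f := ⇑(σ * finRotate (m + 1)))).trans_eq (Fintype.card_fin _)

theorem card_isGenusZero_markedCycleLength_eq_succ (m k : ℕ) :
    #{σ : Perm (Fin (m + 2)) | IsGenusZero σ ∧ markedCycleLength σ = k + 1} =
      genusZeroCount m k := by
  symm
  refine card_bij' (fun π _ => decomposeFin.symm
      (((succPerm π * finRotate (m + 2)) ^ (markedCycleLength π - k)) 0, π))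
    (fun σ _ => (decomposeFin σ).2) (fun π hπ => ?_) (fun σ hσ => ?_) (fun π _ => by simp)
    (fun σ hσ => ?_)
  · simp only [mem_filter, mem_univ, true_and] at hπ ⊢
    exact isGenusZero_decomposeFin_symm_and_markedCycleLength_iff.2 ⟨hπ.1, hπ.2, rfl⟩
  · rw [mem_filter, ← decomposeFin.symm_apply_apply σ,
      isGenusZero_decomposeFin_symm_and_markedCycleLength_iff] at hσ
    simp only [mem_filter, mem_univ, true_and]
    exact ⟨hσ.2.1, hσ.2.2.1⟩
  · rw [mem_filter, ← decomposeFin.symm_apply_apply σ,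
      isGenusZero_decomposeFin_symm_and_markedCycleLength_iff] at hσ
    conv_rhs => rw [← decomposeFin.symm_apply_apply σ]
    rw [← hσ.2.2.2]

theorem genusZeroCount_succ_succ (m k : ℕ) :
    genusZeroCount (m + 1) (k + 1) = genusZeroCount m k + genusZeroCount (m + 1) (k + 2) := by
  rw [genusZeroCount,
    ← card_filter_add_card_filter_not (p := fun σ => markedCycleLength σ = k + 1),
    filter_filter, filter_filter, ← card_isGenusZero_markedCycleLength_eq_succ, genusZeroCount]
  congr 2 <;> ext σ <;> simp only [mem_filter, mem_univ, true_and, and_assoc] <;>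
    exact and_congr_right fun _ => by omega

theorem genusZeroCount_zero (m : ℕ) : genusZeroCount m 0 = genusZeroCount m 1 := by
  unfold genusZeroCount
  congr 1
  ext σ
  simp only [mem_filter, mem_univ, true_and, zero_le, and_true]
  exact ⟨fun h => ⟨h, markedCycleLength_pos σ⟩, And.left⟩

theorem genusZeroCount_eq_zero {m k : ℕ} (hk : m + 1 < k) : genusZeroCount m k = 0 := by
  simp only [genusZeroCount, card_eq_zero, filter_eq_empty_iff, mem_univ, true_implies, not_and,
    not_le]
  exact fun σ _ => (markedCycleLength_le σ).trans_lt hk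

theorem genusZeroCount_zero_one : genusZeroCount 0 1 = 1 := by
  have hσ (σ : Perm (Fin 1)) : IsGenusZero σ ∧ 1 ≤ markedCycleLength σ := by
    rw [Subsingleton.elim (α := Perm (Fin 1)) σ 1, IsGenusZero, one_mul, finRotate_one,
      ← Perm.one_def, cycleCount_one]
    exact ⟨rfl, markedCycleLength_pos _⟩
  simp [genusZeroCount, hσ]

end Count

section Ballot

theorem catalan_add_choose_succ (n : ℕ) :
    catalan n + (2 * n).choose (n + 1) = (2 * n).choose n := by
  have h := Nat.choose_succ_right_eq (2 * n) n
  rw [show 2 * n - n = n by omega] at h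
  refine Nat.eq_of_mul_eq_mul_left n.succ_pos ?_
  rw [mul_add, succ_mul_catalan_eq_centralBinom, Nat.centralBinom, mul_comm (n + 1), h,
    Nat.succ_eq_add_one]
  ring

theorem genusZeroCount_add_choose :
    ∀ (m : ℕ) {k : ℕ}, k ≤ m + 2 →
      genusZeroCount m k + (2 * m + 2 - k).choose (m + 2) = (2 * m + 2 - k).choose (m + 1)
  | 0, k, hk => by
    interval_cases k
    · rw [genusZeroCount_zero, genusZeroCount_zero_one]; rfl
    · rw [genusZeroCount_zero_one]; rfl
    · rw [genusZeroCount_eq_zero (by omega)]; rfl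
  | m + 1, k, hk => by
    rw [show 2 * (m + 1) + 2 = 2 * m + 4 by ring, show m + 1 + 2 = m + 3 from rfl,
      show m + 1 + 1 = m + 2 from rfl]
    induction hk using Nat.decreasingInduction with
    | self =>
      rw [genusZeroCount_eq_zero (by omega), Nat.choose_eq_zero_of_lt (by omega),
        Nat.choose_eq_zero_of_lt (by omega)]
    | of_succ k hk ih =>
      rcases k with _ | k
      · have h₁ : (2 * m + 4).choose (m + 3) = (2 * m + 3).choose (m + 2) +
            (2 * m + 3).choose (m + 3) := Nat.choose_succ_succ' _ _
        have h₂ : (2 * m + 4).choose (m + 2) = (2 * m + 3).choose (m + 1) +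
            (2 * m + 3).choose (m + 2) := Nat.choose_succ_succ' _ _
        have h₃ : (2 * m + 3).choose (m + 2) = (2 * m + 3).choose (m + 1) :=
          Nat.choose_symm_half (m + 1)
        rw [genusZeroCount_zero, Nat.sub_zero]
        rw [zero_add, show 2 * m + 4 - 1 = 2 * m + 3 from rfl] at ih
        omega
      · have h₀ := genusZeroCount_add_choose m (k := k) (by omega)
        have h₁ : (2 * m + 2 - k + 1).choose (m + 3) = (2 * m + 2 - k).choose (m + 2) +
            (2 * m + 2 - k).choose (m + 3) := Nat.choose_succ_succ' _ _
        have h₂ : (2 * m + 2 - k + 1).choose (m + 2) = (2 * m + 2 - k).choose (m + 1) +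
            (2 * m + 2 - k).choose (m + 2) := Nat.choose_succ_succ' _ _
        rw [genusZeroCount_succ_succ, show 2 * m + 4 - (k + 1) = 2 * m + 2 - k + 1 by omega]
        rw [show k + 1 + 1 = k + 2 from rfl, show 2 * m + 4 - (k + 2) = 2 * m + 2 - k by omega]
          at ih
        omega

theorem card_isGenusZero (m : ℕ) :
    #{σ : Perm (Fin (m + 1)) | IsGenusZero σ} = catalan (m + 1) := by
  have h := genusZeroCount_add_choose m (k := 0) (by omega)
  have hcat := catalan_add_choose_succ (m + 1)
  simp only [genusZeroCount, zero_le, and_true, Nat.sub_zero] at h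
  rw [show 2 * (m + 1) = 2 * m + 2 by ring, show m + 1 + 1 = m + 2 from rfl] at hcat
  omega

end Ballot

section Asymptotics

theorem cycleCount_mul_finRotate_add_cycleCount_le {m : ℕ} {σ : Perm (Fin (m + 1))}
    (hσ : ¬IsGenusZero σ) : cycleCount (σ * finRotate (m + 1)) + cycleCount σ ≤ m := by
  obtain ⟨g, hg⟩ := exists_cycleCount_mul_finRotate_add_cycleCount_add_two_mul σ
  rw [IsGenusZero] at hσ
  omega

theorem sum_pow_cycleCount_mem_Icc {m : ℕ} {x : ℝ} (hx : 1 ≤ x) :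
    ∑ σ : Perm (Fin (m + 1)), x ^ (cycleCount (σ * finRotate (m + 1)) + cycleCount σ) ∈
      Set.Icc (catalan (m + 1) * x ^ (m + 2))
        (catalan (m + 1) * x ^ (m + 2) + (m + 1)! * x ^ m) := by
  rw [← sum_filter_add_sum_filter_not univ IsGenusZero,
    sum_congr rfl fun σ hσ => by rw [(mem_filter.1 hσ).2], sum_const, card_isGenusZero,
    nsmul_eq_mul]
  have hbad : ∑ σ ∈ {σ : Perm (Fin (m + 1)) | ¬IsGenusZero σ},
      x ^ (cycleCount (σ * finRotate (m + 1)) + cycleCount σ) ≤ (m + 1)! * x ^ m := by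
    calc _ ≤ ∑ σ ∈ {σ : Perm (Fin (m + 1)) | ¬IsGenusZero σ}, x ^ m :=
          sum_le_sum fun σ hσ => pow_le_pow_right₀ hx
            (cycleCount_mul_finRotate_add_cycleCount_le (mem_filter.1 hσ).2)
      _ ≤ (m + 1)! * x ^ m := by
          rw [sum_const, nsmul_eq_mul]
          gcongr
          exact_mod_cast (card_le_univ _).trans_eq (by simp [Fintype.card_perm])
  exact ⟨le_add_of_nonneg_right (sum_nonneg fun _ _ => by positivity), by gcongr⟩

theorem factorial_mul_choose_eq_prod (n k : ℕ) :
    k ! * (n + k - 1).choose k = ∏ i ∈ range k, (n + i) := by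
  rw [← Nat.ascFactorial_eq_factorial_mul_choose', Nat.ascFactorial_eq_prod_range]

theorem prod_range_add_le {y : ℝ} (hy : 1 ≤ y) :
    ∀ n : ℕ, ∏ i ∈ range (n + 1), (y + i) ≤ y ^ (n + 1) + (n + 2)! * y ^ n
  | 0 => by simp
  | n + 1 => by
    have ih := prod_range_add_le hy n
    have hpow : y ^ n ≤ y ^ (n + 1) := pow_le_pow_right₀ hy n.le_succ
    have hfac : (n + 1 : ℝ) ≤ (n + 2)! := by
      exact_mod_cast (Nat.self_le_factorial _).trans' (by omega)
    rw [prod_range_succ, Nat.factorial_succ (n + 2)]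
    push_cast
    calc _ ≤ (y ^ (n + 1) + (n + 2)! * y ^ n) * (y + (n + 1)) := by gcongr
      _ ≤ _ := by
        nlinarith [mul_le_mul_of_nonneg_left hpow
            (by positivity : (0 : ℝ) ≤ (n + 1) * (n + 2)!),
          mul_le_mul_of_nonneg_right hfac (by positivity : (0 : ℝ) ≤ y ^ (n + 1)),
          pow_succ y n, pow_succ y (n + 1)]

theorem prod_range_add_mem_Icc {y : ℝ} (hy : 1 ≤ y) (n : ℕ) :
    ∏ i ∈ range (n + 1), (y + i) ∈
      Set.Icc (y ^ (n + 1)) (y ^ (n + 1) + (n + 2)! * y ^ n) := by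
  refine ⟨?_, prod_range_add_le hy n⟩
  calc y ^ (n + 1) = ∏ _i ∈ range (n + 1), y := by simp
    _ ≤ _ := prod_le_prod (fun _ _ => by positivity) fun i _ => by simp

theorem abs_div_sub_div_pow_le {x S D c A K : ℝ} {m : ℕ} (hx : 0 < x) (hc : 0 ≤ c)
    (hS : S ∈ Set.Icc (c * x ^ (m + 2)) (c * x ^ (m + 2) + A * x ^ m))
    (hD : D ∈ Set.Icc ((x ^ 2) ^ (m + 1)) ((x ^ 2) ^ (m + 1) + K * (x ^ 2) ^ m)) :
    |S / D - c / x ^ m| ≤ (A + c * K) / x ^ (m + 2) := by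
  rw [show x ^ (m + 2) = x ^ 2 * x ^ m by ring,
    show (x ^ 2) ^ (m + 1) = x ^ 2 * (x ^ m) ^ 2 by ring,
    show (x ^ 2) ^ m = (x ^ m) ^ 2 by ring] at *
  have hu : 0 < x ^ 2 := by positivity
  have ht : 0 < x ^ m := by positivity
  generalize x ^ 2 = u at *
  generalize x ^ m = t at *
  obtain ⟨hS₁, hS₂⟩ := hS
  obtain ⟨hD₁, hD₂⟩ := hD
  have hA : 0 ≤ A := nonneg_of_mul_nonneg_left (by linarith) ht
  have hK : 0 ≤ K := nonneg_of_mul_nonneg_left (by linarith) (by positivity : 0 < t ^ 2)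
  have hD0 : 0 < D := lt_of_lt_of_le (by positivity) hD₁
  have hN : |S * t - D * c| ≤ (A + c * K) * t ^ 2 :=
    abs_le.2 ⟨by nlinarith [mul_le_mul_of_nonneg_left hD₂ hc], by nlinarith⟩
  rw [div_sub_div _ _ hD0.ne' ht.ne', abs_div, abs_of_pos (mul_pos hD0 ht),
    div_le_div_iff₀ (by positivity) (by positivity)]
  calc |S * t - D * c| * (u * t) ≤ (A + c * K) * t ^ 2 * (u * t) := by gcongr
    _ = (A + c * K) * (u * t ^ 2) * t := by ring
    _ ≤ (A + c * K) * D * t := by gcongr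
    _ = (A + c * K) * (D * t) := by ring

end Asymptotics

theorem asymptotic_purity_catalan (α : ℕ) (hα : 1 ≤ α) :
    ∃ C : ℝ, ∀ d : ℕ, 1 ≤ d →
      |(1 / ((α.factorial : ℝ) * (Nat.choose (d ^ 2 + α - 1) α : ℝ))) *
          ∑ σ : Equiv.Perm (Fin α), (d : ℝ) ^ (cycleCount (σ * finRotate α) + cycleCount σ)
        - (catalan α : ℝ) * (d : ℝ) ^ ((1 : ℤ) - α)|
        ≤ C * (d : ℝ) ^ (-((α : ℤ) + 1)) := by
  obtain ⟨m, rfl⟩ := Nat.exists_eq_add_of_le' hα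
  refine ⟨(m + 1)! + catalan (m + 1) * (m + 2)!, fun d hd => ?_⟩
  have hx : (1 : ℝ) ≤ d := by exact_mod_cast hd
  have hden : ((m + 1)! : ℝ) * ((d ^ 2 + (m + 1) - 1).choose (m + 1) : ℕ) =
      ∏ i ∈ range (m + 1), ((d : ℝ) ^ 2 + i) := by
    rw [← Nat.cast_mul, factorial_mul_choose_eq_prod]
    push_cast
    rfl
  have hpow₁ : (d : ℝ) ^ ((1 : ℤ) - ((m + 1 : ℕ) : ℤ)) = ((d : ℝ) ^ m)⁻¹ := by
    rw [show (1 : ℤ) - ((m + 1 : ℕ) : ℤ) = -(m : ℤ) by push_cast; ring, zpow_neg,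
      zpow_natCast]
  have hpow₂ : (d : ℝ) ^ (-(((m + 1 : ℕ) : ℤ) + 1)) = ((d : ℝ) ^ (m + 2))⁻¹ := by
    rw [show -(((m + 1 : ℕ) : ℤ) + 1) = -((m + 2 : ℕ) : ℤ) by push_cast; ring, zpow_neg,
      zpow_natCast]
  rw [hden, hpow₁, hpow₂, one_div_mul_eq_div, ← div_eq_mul_inv, ← div_eq_mul_inv]
  exact abs_div_sub_div_pow_le (by positivity) (by positivity) (sum_pow_cycleCount_mem_Icc hx)
    (prod_range_add_mem_Icc (one_le_pow₀ hx) m)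
end
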